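/- For every even n ≥ 2, the maximum cardinality of a family 𝓖 of simple graphs on the vertex set Fin n such that for any two distinct members G, G' ∈ 𝓖 the symmetric difference G ⊕ G' is 2-connected equals 2^(n-2); that is, there exists such a family of cardinality 2^(n-2), and every such family has cardinality at most 2^(n-2). -/

import Mathlib

open SimpleGraph Filter

/-- The symmetric difference of two simple graphs on the same vertex set:
two vertices are adjacent iff they are adjacent in exactly one of the graphs. -/
def symmDiffG {V : Type*} (G G' : SimpleGraph V) : SimpleGraph V where
  Adj u v := (G.Adj u v ∧ ¬ G'.Adj u v) ∨ (G'.Adj u v ∧ ¬ G.Adj u v)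
  symm := by
    constructor
    intro u v h
    rcases h with ⟨h1, h2⟩ | ⟨h1, h2⟩
    · exact Or.inl ⟨h1.symm, fun h => h2 h.symm⟩
    · exact Or.inr ⟨h1.symm, fun h => h2 h.symm⟩
  loopless := by
    constructor
    intro u h
    rcases h with ⟨h1, _⟩ | ⟨h1, _⟩
    · exact h1.ne rfl
    · exact h1.ne rfl


/-- A graph on a finite vertex set `V` is 2-connected if `|V| ≥ 3` and for every
subset `S ⊆ V` with `|S| ≤ 1` the subgraph induced on `V \ S` is connected. -/
def IsTwoConnected {V : Type*} [Fintype V] (G : SimpleGraph V) : Prop :=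
  3 ≤ Fintype.card V ∧ ∀ S : Set V, S.ncard ≤ 1 → (G.induce Sᶜ).Connected

private lemma reach_head {V : Type*} {G : SimpleGraph V} {a b : V}
    (h : G.Reachable a b) (hne : a ≠ b) : ∃ c, G.Adj a c := by
  obtain ⟨p⟩ := h
  cases p with
  | nil => exact absurd rfl hne
  | cons h _ => exact ⟨_, h⟩

/-- Complete bipartite graph with parts `D`, `Dᶜ`. -/
def bipG {n : ℕ} (D : Finset (Fin n)) : SimpleGraph (Fin n) where
  Adj u v := (u ∈ D) ≠ (v ∈ D)
  symm := ⟨fun _ _ h => Ne.symm h⟩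
  loopless := ⟨fun _ h => h rfl⟩

private lemma symmDiffG_adj {V : Type*} (G G' : SimpleGraph V) (u v : V) :
    (symmDiffG G G').Adj u v ↔
      ((G.Adj u v ∧ ¬ G'.Adj u v) ∨ (G'.Adj u v ∧ ¬ G.Adj u v)) := Iff.rfl

private lemma bipG_adj {n : ℕ} (D : Finset (Fin n)) (u v : Fin n) :
    (bipG D).Adj u v ↔ ¬ ((u ∈ D) ↔ (v ∈ D)) := by
  change (u ∈ D) ≠ (v ∈ D) ↔ _
  exact ⟨fun h h2 => h (propext h2), fun h h2 => h (iff_of_eq h2)⟩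

private lemma symmDiffG_bipG {n : ℕ} (A B : Finset (Fin n)) :
    symmDiffG (bipG A) (bipG B) = bipG (symmDiff A B) := by
  ext u v
  rw [symmDiffG_adj, bipG_adj, bipG_adj, bipG_adj]
  rw [Finset.mem_symmDiff, Finset.mem_symmDiff]
  by_cases hua : u ∈ A <;> by_cases hub : u ∈ B <;>
    by_cases hva : v ∈ A <;> by_cases hvb : v ∈ B <;>
    simp [hua, hub, hva, hvb]

private lemma bipG_twoConnected {n : ℕ} (D : Finset (Fin n))
    (hD : 2 ≤ D.card) (hDc : 2 ≤ Dᶜ.card) : IsTwoConnected (bipG D) := by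
  have hcompl : Dᶜ.card = n - D.card := by
    rw [Finset.card_compl, Fintype.card_fin]
  have hDn : D.card ≤ n := by
    simpa using Finset.card_le_univ D
  have hn4 : 4 ≤ n := by omega
  constructor
  · simp only [Fintype.card_fin]; omega
  · intro S hS
    have hpick : ∀ E : Finset (Fin n), 2 ≤ E.card → ∃ w ∈ E, w ∉ S := by
      intro E hE
      by_contra hcon
      push_neg at hcon
      have hsub : (E : Set (Fin n)) ⊆ S := fun x hx => hcon x hx
      have hle : (E : Set (Fin n)).ncard ≤ S.ncard :=
        Set.ncard_le_ncard hsub (Set.toFinite S)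
      rw [Set.ncard_coe_finset] at hle
      omega
    have hadj : ∀ (a b : Fin n) (ha : a ∈ Sᶜ) (hb : b ∈ Sᶜ),
        ¬ ((a ∈ D) ↔ (b ∈ D)) → ((bipG D).induce Sᶜ).Adj ⟨a, ha⟩ ⟨b, hb⟩ := by
      intro a b ha hb h
      simp only [comap_adj, Function.Embedding.coe_subtype, bipG_adj]
      exact h
    rw [connected_iff]
    constructor
    · rintro ⟨u, hu⟩ ⟨v, hv⟩
      by_cases h1 : u ∈ D <;> by_cases h2 : v ∈ D
      · -- both in D, go through Dᶜ
        obtain ⟨w, hwD, hwS⟩ := hpick Dᶜ hDc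
        have hwD' : w ∉ D := Finset.mem_compl.mp hwD
        exact ((hadj u w hu hwS (by tauto)).reachable).trans
          ((hadj w v hwS hv (by tauto)).reachable)
      · exact (hadj u v hu hv (by tauto)).reachable
      · exact (hadj u v hu hv (by tauto)).reachable
      · obtain ⟨w, hwD, hwS⟩ := hpick D hD
        exact ((hadj u w hu hwS (by tauto)).reachable).trans
          ((hadj w v hwS hv (by tauto)).reachable)
    · obtain ⟨w, _, hwS⟩ := hpick D hD
      exact ⟨⟨w, hwS⟩⟩

/-- In a 2-connected graph, a vertex `v0` has a neighbor other than any given `v1`. -/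
private lemma twoConnected_neighbor {n : ℕ} {H : SimpleGraph (Fin n)}
    (h : IsTwoConnected H) (v0 v1 : Fin n) (hne : v0 ≠ v1) :
    ∃ x, x ≠ v1 ∧ H.Adj v0 x := by
  obtain ⟨hcard, hconn⟩ := h
  have hn3 : 3 ≤ n := by simpa using hcard
  by_contra hcon
  push_neg at hcon
  -- find z distinct from v0 and v1
  have hz : ∃ z : Fin n, z ≠ v0 ∧ z ≠ v1 := by
    by_contra hz
    push_neg at hz
    have hsub : (Finset.univ : Finset (Fin n)) ⊆ {v0, v1} := by
      intro x _
      rcases Classical.em (x = v0) with h | h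
      · simp [h]
      · simp [hz x h]
    have := Finset.card_le_card hsub
    have h2 : ({v0, v1} : Finset (Fin n)).card ≤ 2 :=
      (Finset.card_insert_le _ _).trans (by simp)
    simp [Finset.card_univ] at this
    omega
  obtain ⟨z, hz0, hz1⟩ := hz
  have hc := hconn {v1} (by simp)
  have h0 : v0 ∈ ({v1} : Set (Fin n))ᶜ := by simpa using hne
  have hzm : z ∈ ({v1} : Set (Fin n))ᶜ := by simpa using hz1
  have hr := hc ⟨v0, h0⟩ ⟨z, hzm⟩
  obtain ⟨c, hcadj⟩ := reach_head hr
    (fun hq => hz0 (congrArg Subtype.val hq).symm)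
  simp only [comap_adj, Function.Embedding.coe_subtype] at hcadj
  have : (c : Fin n) = v1 := by
    by_contra hcc
    exact hcon c hcc hcadj
  exact c.2 (by simp [this])

theorem stmt_2 (n : ℕ) (hn : 2 ≤ n) (he : Even n) :
    IsGreatest {m : ℕ | ∃ 𝓖 : Finset (SimpleGraph (Fin n)),
        (∀ G ∈ 𝓖, ∀ G' ∈ 𝓖, G ≠ G' → IsTwoConnected (symmDiffG G G')) ∧ 𝓖.card = m}
      (2 ^ (n - 2)) := by
  classical
  have h0n : 0 < n := by omega
  have h1n : 1 < n := by omega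
  set v0 : Fin n := ⟨0, h0n⟩ with hv0
  set v1 : Fin n := ⟨1, h1n⟩ with hv1
  have hv01 : v0 ≠ v1 := by
    intro h
    exact absurd (congrArg Fin.val h) (by simp)
  constructor
  · -- membership: the construction
    set base : Finset (Fin n) := (Finset.univ.erase v0).erase v1 with hbase
    have hv1mem : v1 ∈ Finset.univ.erase v0 := by
      simp [hv01.symm]
    have hbase_card : base.card = n - 2 := by
      rw [hbase, Finset.card_erase_of_mem hv1mem,
        Finset.card_erase_of_mem (Finset.mem_univ v0), Finset.card_univ, Fintype.card_fin]
      omega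
    set sel : Finset (Fin n) → Finset (Fin n) :=
      fun T => if Even T.card then T else insert v1 T with hsel
    have hv1T : ∀ T ∈ base.powerset, v1 ∉ T := by
      intro T hT h
      have := Finset.mem_powerset.mp hT h
      simp [hbase] at this
    have hv0T : ∀ T ∈ base.powerset, v0 ∉ T := by
      intro T hT h
      have := Finset.mem_powerset.mp hT h
      simp [hbase] at this
    have hsel_v0 : ∀ T ∈ base.powerset, v0 ∉ sel T := by
      intro T hT
      rw [hsel]
      by_cases h : Even T.card <;> simp [h, hv0T T hT, hv01]
    have hsel_even : ∀ T ∈ base.powerset, Even (sel T).card := by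
      intro T hT
      rw [hsel]
      by_cases h : Even T.card <;> simp [h]
      rw [Finset.card_insert_of_notMem (hv1T T hT)]
      exact Odd.add_one (Nat.not_even_iff_odd.mp h)
    have hsel_erase : ∀ T ∈ base.powerset, (sel T).erase v1 = T := by
      intro T hT
      rw [hsel]
      by_cases h : Even T.card <;> simp [h, Finset.erase_insert,
        Finset.erase_eq_of_notMem (hv1T T hT), hv1T T hT]
    -- the graphs determine the sets
    have hrec : ∀ A : Finset (Fin n), v0 ∉ A → ∀ u, ((bipG A).Adj u v0 ↔ u ∈ A) := by
      intro A hA u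
      rw [bipG_adj]
      constructor
      · intro h
        by_cases hu : u ∈ A
        · exact hu
        · exact absurd (iff_of_false hu hA) h
      · intro h hiff
        exact hA (hiff.mp h)
    have hinj : Set.InjOn (fun T => bipG (sel T)) ↑base.powerset := by
      intro T hT T' hT' heq
      have hAB : sel T = sel T' := by
        ext u
        rw [← hrec (sel T) (hsel_v0 T hT) u, ← hrec (sel T') (hsel_v0 T' hT') u]
        simp only at heq
        rw [heq]
      calc T = (sel T).erase v1 := (hsel_erase T hT).symm
        _ = (sel T').erase v1 := by rw [hAB]
        _ = T' := hsel_erase T' hT'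
    refine ⟨base.powerset.image (fun T => bipG (sel T)), ?_, ?_⟩
    · intro G hG G' hG' hne
      obtain ⟨T, hT, rfl⟩ := Finset.mem_image.mp hG
      obtain ⟨T', hT', rfl⟩ := Finset.mem_image.mp hG'
      set A := sel T with hA
      set B := sel T' with hB
      have hABne : A ≠ B := by
        intro h
        apply hne
        show bipG A = bipG B
        rw [h]
      set D := symmDiff A B with hD
      have hDv0 : v0 ∉ D := by
        rw [hD, Finset.mem_symmDiff]
        push_neg
        exact ⟨fun h => absurd h (hsel_v0 T hT), fun h => absurd h (hsel_v0 T' hT')⟩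
      have hDcard : D.card + 2 * (A ∩ B).card = A.card + B.card := by
        have h1 : (A \ B).card + (A ∩ B).card = A.card :=
          Finset.card_sdiff_add_card_inter A B
        have h2 : (B \ A).card + (B ∩ A).card = B.card :=
          Finset.card_sdiff_add_card_inter B A
        have h3 : D.card = (A \ B).card + (B \ A).card := by
          rw [hD, symmDiff_def, Finset.sup_eq_union,
            Finset.card_union_of_disjoint disjoint_sdiff_sdiff]
        rw [Finset.inter_comm B A] at h2
        omega
      have hDeven : Even D.card := by
        obtain ⟨a, ha⟩ := hsel_even T hT
        obtain ⟨b, hb⟩ := hsel_even T' hT'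
        rw [← hA] at ha; rw [← hB] at hb
        refine ⟨(a + b) - (A ∩ B).card, by omega⟩
      have hDne : D ≠ ∅ := by
        intro h
        exact hABne (symmDiff_eq_bot.mp h)
      have hD1 : 1 ≤ D.card := Finset.card_pos.mpr (Finset.nonempty_iff_ne_empty.mpr hDne)
      have hD2 : 2 ≤ D.card := by
        obtain ⟨k, hk⟩ := hDeven; omega
      have hDn : D.card ≤ n - 1 := by
        have hsub : D ⊆ Finset.univ.erase v0 := by
          intro x hx
          rcases Classical.em (x = v0) with h | h
          · exact absurd (h ▸ hx) hDv0
          · simp [h]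
        have := Finset.card_le_card hsub
        rwa [Finset.card_erase_of_mem (Finset.mem_univ v0), Finset.card_univ,
          Fintype.card_fin] at this
      have hDc2 : 2 ≤ Dᶜ.card := by
        rw [Finset.card_compl, Fintype.card_fin]
        obtain ⟨k, hk⟩ := hDeven
        obtain ⟨m, hm⟩ := he
        omega
      rw [symmDiffG_bipG]
      exact bipG_twoConnected D hD2 hDc2
    · rw [Finset.card_image_of_injOn hinj, Finset.card_powerset, hbase_card]
  · -- upper bound
    rintro m ⟨𝓖, hpair, rfl⟩
    set Φ : SimpleGraph (Fin n) → ({x : Fin n // x ≠ v0 ∧ x ≠ v1} → Bool) :=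
      fun G x => decide (G.Adj v0 x.1) with hΦ
    have hinj : Set.InjOn Φ ↑𝓖 := by
      intro G hG G' hG' heq
      by_contra hne
      have h2c := hpair G hG G' hG' hne
      obtain ⟨x, hx1, hadj⟩ := twoConnected_neighbor h2c v0 v1 hv01
      have hx0 : x ≠ v0 := hadj.ne'
      have hiff : G.Adj v0 x ↔ G'.Adj v0 x := by
        have := congrFun heq ⟨x, hx0, hx1⟩
        rw [hΦ] at this
        simpa using this
      rcases hadj with ⟨h1, h2⟩ | ⟨h1, h2⟩
      · exact h2 (hiff.mp h1)
      · exact h2 (hiff.mpr h1)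
    have hcount : Fintype.card {x : Fin n // x ≠ v0 ∧ x ≠ v1} = n - 2 := by
      rw [Fintype.card_subtype]
      have : Finset.univ.filter (fun x : Fin n => x ≠ v0 ∧ x ≠ v1)
          = (Finset.univ.erase v0).erase v1 := by
        ext x
        simp [and_comm]
      rw [this, Finset.card_erase_of_mem (by simp [hv01.symm]),
        Finset.card_erase_of_mem (Finset.mem_univ v0), Finset.card_univ, Fintype.card_fin]
      omega
    calc 𝓖.card = (𝓖.image Φ).card := (Finset.card_image_of_injOn hinj).symm
      _ ≤ Fintype.card ({x : Fin n // x ≠ v0 ∧ x ≠ v1} → Bool) := Finset.card_le_univ _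
      _ = 2 ^ (n - 2) := by rw [Fintype.card_fun, Fintype.card_bool, hcount]
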